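/- arXiv:1805.07196 — 2 statements merged into one kernel-verified Lean document; each statement's English description precedes it below -/
import Mathlib

section
/- Let G be a PDES with controllable events Σc and observable events Σo, and let L be a probabilistic language with L ⊆ L_G. Then there exists a scaling-factor function K such that L_{K/G} = L if and only if L is probabilistic controllable w.r.t. L_G and Σc and probabilistic observable w.r.t. L_G, Σc and Σo. -/
open scoped BigOperators

noncomputable section

/-- Chain product: given step weights `w s σ` (interpreted as the conditional
probability of event `σ` after string `s`), `chainProd w pre rest` multiplies the
weights along `rest`, starting from the already-consumed prefix `pre`. -/
def chainProd {E : Type*} (w : List E → E → ℝ) : List E → List E → ℝ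
  | _, [] => 1
  | pre, σ :: rest => w pre σ * chainProd w (pre ++ [σ]) rest

/-- The (probabilistic) language generated by step weights `w`:
`langOf w [] = 1` and `langOf w (s ++ [σ]) = langOf w s * w s σ`. -/
def langOf {E : Type*} (w : List E → E → ℝ) : List E → ℝ := chainProd w []

/-- A probabilistic language over a finite event set `E`. -/
structure PLang (E : Type*) [Fintype E] where
  toFun : List E → ℝ
  nonneg : ∀ s, 0 ≤ toFun s
  le_one : ∀ s, toFun s ≤ 1
  eps : toFun [] = 1
  step : ∀ s, (∑ σ : E, toFun (s ++ [σ])) ≤ toFun s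

/-- `L1` is a probabilistic sublanguage of `L2`. -/
def PSub {E : Type*} (L1 L2 : List E → ℝ) : Prop :=
  (∀ s, 0 < L1 s → 0 < L2 s) ∧
  ∀ s, 0 < L1 s → ∀ σ : E, L1 (s ++ [σ]) / L1 s ≤ L2 (s ++ [σ]) / L2 s

/-- Intersection of probabilistic languages. -/
def pInter {E : Type*} (L1 L2 : List E → ℝ) : List E → ℝ :=
  langOf fun s σ => min (L1 (s ++ [σ]) / L1 s) (L2 (s ++ [σ]) / L2 s)

/-- Natural projection erasing the events outside the observable set `So`. -/
def proj {E : Type*} [DecidableEq E] (So : Finset E) (s : List E) : List E :=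
  s.filter fun σ => decide (σ ∈ So)

/-- A probabilistic discrete event system (probabilistic automaton). -/
structure PDES (X : Type*) (E : Type*) [Fintype E] where
  x0 : X
  trans : X → E → Option X
  prob : X → E → ℝ
  prob_nonneg : ∀ x σ, 0 ≤ prob x σ
  prob_le_one : ∀ x σ, prob x σ ≤ 1
  prob_pos_iff : ∀ x σ, 0 < prob x σ ↔ (trans x σ).isSome
  sum_le_one : ∀ x, (∑ σ : E, prob x σ) ≤ 1

/-- Extension of the partial transition function to strings. -/
def PDES.transStar {X E : Type*} [Fintype E] (G : PDES X E) (s : List E) : Option X :=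
  s.foldl (fun ox σ => ox.bind fun x => G.trans x σ) (some G.x0)

/-- Step weight of a PDES: `ρ(δ(x0,s),σ)` when `δ(x0,s)` is defined, `0` otherwise. -/
def PDES.w {X E : Type*} [Fintype E] (G : PDES X E) (s : List E) (σ : E) : ℝ :=
  (G.transStar s).elim 0 fun x => G.prob x σ

/-- The probabilistic language generated by a PDES. -/
def PDES.lang {X E : Type*} [Fintype E] (G : PDES X E) : List E → ℝ := langOf G.w

/-- The set of control patterns: subsets of events containing every uncontrollable event. -/
def ControlPatterns {E : Type*} [Fintype E] [DecidableEq E] (Sc : Finset E) :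
    Finset (Finset E) :=
  Finset.univ.filter fun θ => Scᶜ ⊆ θ

/-- `Sp` is a probabilistic P-supervisor for `G`: to every observation of a string in the
support of `L_G` it assigns a probability distribution on the control patterns. -/
def IsSupervisor {X E : Type*} [Fintype E] [DecidableEq E] (G : PDES X E)
    (Sc So : Finset E) (Sp : List E → Finset E → ℝ) : Prop :=
  ∀ s : List E, 0 < G.lang s →
    (∀ θ ∈ ControlPatterns Sc, 0 ≤ Sp (proj So s) θ) ∧
    (∑ θ ∈ ControlPatterns Sc, Sp (proj So s) θ) = 1

/-- The controlled probabilistic language `L_{Sp/G}`. -/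
def supLang {X E : Type*} [Fintype E] [DecidableEq E] (G : PDES X E)
    (Sc So : Finset E) (Sp : List E → Finset E → ℝ) : List E → ℝ :=
  langOf fun s σ =>
    G.w s σ * ∑ θ ∈ (ControlPatterns Sc).filter (fun θ => σ ∈ θ), Sp (proj So s) θ

/-- `K` is a scaling-factor function for `G`: on every observation of a string in the
support of `L_G` it takes values in `[0,1]` and equals `1` on uncontrollable events. -/
def IsScaling {X E : Type*} [Fintype E] [DecidableEq E] (G : PDES X E)
    (Sc So : Finset E) (K : List E → E → ℝ) : Prop :=
  ∀ s : List E, 0 < G.lang s → ∀ σ : E,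
    0 ≤ K (proj So s) σ ∧ K (proj So s) σ ≤ 1 ∧ (σ ∉ Sc → K (proj So s) σ = 1)

/-- The controlled probabilistic language `L_{K/G}`. -/
def kLang {X E : Type*} [Fintype E] [DecidableEq E] (G : PDES X E)
    (So : Finset E) (K : List E → E → ℝ) : List E → ℝ :=
  langOf fun s σ => G.w s σ * K (proj So s) σ

/-- Probabilistic controllability (language form). -/
def ProbControllable {E : Type*} (L M : List E → ℝ) (Sc : Finset E) : Prop :=
  ∀ s : List E, 0 < L s → ∀ σ : E, σ ∉ Sc →
    L (s ++ [σ]) / L s = M (s ++ [σ]) / M s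

/-- Probabilistic observability (language form). -/
def ProbObservable {E : Type*} [DecidableEq E] (L M : List E → ℝ)
    (Sc So : Finset E) : Prop :=
  ∀ s1 s2 : List E, 0 < L s1 → 0 < L s2 → proj So s1 = proj So s2 →
    ∀ σ ∈ Sc,
      (M (s1 ++ [σ]) / M s1) * (L (s2 ++ [σ]) / L s2) =
      (M (s2 ++ [σ]) / M s2) * (L (s1 ++ [σ]) / L s1)

/-- Probabilistic controllability (automata form). -/
def AutControllable {X Q E : Type*} [Fintype E] (G : PDES X E) (H : PDES Q E)
    (Sc : Finset E) : Prop :=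
  ∀ s : List E, 0 < H.lang s → ∀ x q,
    G.transStar s = some x → H.transStar s = some q →
    ∀ σ : E, σ ∉ Sc → H.prob q σ = G.prob x σ

/-- Probabilistic observability (automata form). -/
def AutObservable {X Q E : Type*} [Fintype E] [DecidableEq E] (G : PDES X E)
    (H : PDES Q E) (Sc So : Finset E) : Prop :=
  ∀ s1 s2 : List E, 0 < H.lang s1 → 0 < H.lang s2 → proj So s1 = proj So s2 →
    ∀ x1 q1 x2 q2,
      G.transStar s1 = some x1 → H.transStar s1 = some q1 →
      G.transStar s2 = some x2 → H.transStar s2 = some q2 →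
      ∀ σ ∈ Sc, G.prob x1 σ * H.prob q2 σ = G.prob x2 σ * H.prob q1 σ

/-- Reachability in the controllability-testing automaton `G_tc`.
States are pairs `(x,q)` (as `Sum.inl`) together with the special state `d` (`Sum.inr ()`). -/
inductive TcReach {X Q E : Type*} [Fintype E] (G : PDES X E) (H : PDES Q E)
    (Sc : Finset E) : (X × Q) ⊕ Unit → Prop
  | init : TcReach G H Sc (Sum.inl (G.x0, H.x0))
  | good (x q x' q' σ) : TcReach G H Sc (Sum.inl (x, q)) →
      G.trans x σ = some x' → H.trans q σ = some q' →
      ((σ ∉ Sc ∧ G.prob x σ = H.prob q σ) ∨ σ ∈ Sc) →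
      TcReach G H Sc (Sum.inl (x', q'))
  | bad (x q σ) : TcReach G H Sc (Sum.inl (x, q)) →
      σ ∉ Sc → G.prob x σ ≠ H.prob q σ →
      TcReach G H Sc (Sum.inr ())

/-- Reachability in the observability-testing automaton `G_to`.
States are 4-tuples `(x1,q1,x2,q2)` (as `Sum.inl`) together with the special state `d`. -/
inductive ToReach {X Q E : Type*} [Fintype E] (G : PDES X E) (H : PDES Q E)
    (Sc So : Finset E) : (X × Q × X × Q) ⊕ Unit → Prop
  | init : ToReach G H Sc So (Sum.inl (G.x0, H.x0, G.x0, H.x0))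
  | sync (x1 q1 x2 q2 x1' q1' x2' q2' σ) :
      ToReach G H Sc So (Sum.inl (x1, q1, x2, q2)) →
      G.trans x1 σ = some x1' → H.trans q1 σ = some q1' →
      G.trans x2 σ = some x2' → H.trans q2 σ = some q2' →
      (σ ∉ Sc ∨ (σ ∈ Sc ∧ G.prob x1 σ * H.prob q2 σ = G.prob x2 σ * H.prob q1 σ)) →
      ToReach G H Sc So (Sum.inl (x1', q1', x2', q2'))
  | bad (x1 q1 x2 q2 σ) :
      ToReach G H Sc So (Sum.inl (x1, q1, x2, q2)) →
      σ ∈ Sc → G.prob x1 σ * H.prob q2 σ ≠ G.prob x2 σ * H.prob q1 σ →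
      ToReach G H Sc So (Sum.inr ())
  | left (x1 q1 x2 q2 x1' q1' σ) :
      ToReach G H Sc So (Sum.inl (x1, q1, x2, q2)) → σ ∉ So →
      G.trans x1 σ = some x1' → H.trans q1 σ = some q1' →
      ToReach G H Sc So (Sum.inl (x1', q1', x2, q2))
  | right (x1 q1 x2 q2 x2' q2' σ) :
      ToReach G H Sc So (Sum.inl (x1, q1, x2, q2)) → σ ∉ So →
      G.trans x2 σ = some x2' → H.trans q2 σ = some q2' →
      ToReach G H Sc So (Sum.inl (x1, q1, x2', q2'))

/-- `H` is a probabilistic subautomaton of `G`, as witnessed by the state inclusion `e`. -/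
def SubautomatonVia {Q X E : Type*} [Fintype E] (H : PDES Q E) (G : PDES X E)
    (e : Q → X) : Prop :=
  Function.Injective e ∧ e H.x0 = G.x0 ∧
  ∀ q σ, H.prob q σ ≤ G.prob (e q) σ ∧
    ∀ q', H.trans q σ = some q' → G.trans (e q) σ = some (e q')

/-- The product of two PDESs. -/
def PDES.prod {X Q E : Type*} [Fintype E] (G : PDES X E) (H : PDES Q E) :
    PDES (X × Q) E where
  x0 := (G.x0, H.x0)
  trans := fun p σ => (G.trans p.1 σ).bind fun x => (H.trans p.2 σ).map fun q => (x, q)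
  prob := fun p σ => min (G.prob p.1 σ) (H.prob p.2 σ)
  prob_nonneg := fun p σ => le_min (G.prob_nonneg _ _) (H.prob_nonneg _ _)
  prob_le_one := fun p σ => le_trans (min_le_left _ _) (G.prob_le_one _ _)
  prob_pos_iff := by
    intro p σ
    rw [lt_min_iff, G.prob_pos_iff, H.prob_pos_iff]
    cases hG : G.trans p.1 σ <;> cases hH : H.trans p.2 σ <;> simp [hG, hH]
  sum_le_one := fun p =>
    le_trans (Finset.sum_le_sum fun σ _ => min_le_left _ _) (G.sum_le_one p.1)

end

/-!
Along an `L`-supported string, `L_{K/G} = L` says exactly that the conditional probability of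
`L` at `s` is `ρ(δ(x0,s),σ) · K(P(s))(σ)`. Controllability is then the constraint `K = 1` on
uncontrollable events, and observability says that the ratio of the conditional probabilities of
`L` and `L_G` depends on `s` only through `P(s)`, so this ratio is a well-defined scaling factor.
-/

section Language

variable {E : Type*}

theorem chainProd_append_singleton (w : List E → E → ℝ) (s : List E) (σ : E) :
    ∀ pre, chainProd w pre (s ++ [σ]) = chainProd w pre s * w (pre ++ s) σ := by
  induction s with
  | nil => simp [chainProd]
  | cons a s ih =>
    intro pre
    simp only [List.cons_append, chainProd, ih, List.append_assoc, List.nil_append, mul_assoc]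

theorem langOf_append_singleton (w : List E → E → ℝ) (s : List E) (σ : E) :
    langOf w (s ++ [σ]) = langOf w s * w s σ :=
  chainProd_append_singleton w s σ []

theorem langOf_append_singleton_div {w : List E → E → ℝ} {s : List E} (hs : langOf w s ≠ 0)
    (σ : E) : langOf w (s ++ [σ]) / langOf w s = w s σ := by
  rw [langOf_append_singleton, mul_div_cancel_left₀ _ hs]

variable [Fintype E]

theorem PLang.apply_append_singleton_eq_zero (L : PLang E) {s : List E} (hs : L.toFun s = 0)
    (σ : E) : L.toFun (s ++ [σ]) = 0 := by
  have hle : L.toFun (s ++ [σ]) ≤ ∑ τ : E, L.toFun (s ++ [τ]) :=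
    Finset.single_le_sum (fun τ _ => L.nonneg (s ++ [τ])) (Finset.mem_univ σ)
  linarith [L.step s, L.nonneg (s ++ [σ])]

theorem PLang.toFun_eq_langOf_iff (L : PLang E) (w : List E → E → ℝ) :
    L.toFun = langOf w ↔
      ∀ s, 0 < L.toFun s → ∀ σ, L.toFun (s ++ [σ]) / L.toFun s = w s σ := by
  constructor
  · rintro h s hs σ
    rw [h] at hs ⊢
    exact langOf_append_singleton_div hs.ne' σ
  · intro h
    funext s
    induction s using List.reverseRecOn with
    | nil => exact L.eps
    | append_singleton s σ ih =>
      rw [langOf_append_singleton, ← ih]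
      rcases (L.nonneg s).eq_or_lt with hs | hs
      · rw [← hs, zero_mul, L.apply_append_singleton_eq_zero hs.symm]
      · rw [← h s hs σ, mul_div_cancel₀ _ hs.ne']

end Language

section Supervision

variable {X E : Type*} [Fintype E] {G : PDES X E} {L : PLang E}

theorem PDES.w_nonneg (G : PDES X E) (s : List E) (σ : E) : 0 ≤ G.w s σ := by
  unfold PDES.w
  cases G.transStar s with
  | none => exact le_rfl
  | some x => exact G.prob_nonneg x σ

theorem PSub.div_le_w (hsub : PSub L.toFun G.lang) {s : List E} (hs : 0 < L.toFun s) (σ : E) :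
    L.toFun (s ++ [σ]) / L.toFun s ≤ G.w s σ :=
  langOf_append_singleton_div (hsub.1 s hs).ne' σ ▸ hsub.2 s hs σ

theorem probControllable_lang_iff (hsub : PSub L.toFun G.lang) (Sc : Finset E) :
    ProbControllable L.toFun G.lang Sc ↔
      ∀ s, 0 < L.toFun s → ∀ σ ∉ Sc, L.toFun (s ++ [σ]) / L.toFun s = G.w s σ := by
  refine forall₂_congr fun s hs => ?_
  simp only [langOf_append_singleton_div (hsub.1 s hs).ne', PDES.lang]

variable [DecidableEq E]

theorem probObservable_lang_iff (hsub : PSub L.toFun G.lang) (Sc So : Finset E) :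
    ProbObservable L.toFun G.lang Sc So ↔
      ∀ s1 s2, 0 < L.toFun s1 → 0 < L.toFun s2 → proj So s1 = proj So s2 → ∀ σ ∈ Sc,
        G.w s1 σ * (L.toFun (s2 ++ [σ]) / L.toFun s2) =
          G.w s2 σ * (L.toFun (s1 ++ [σ]) / L.toFun s1) := by
  refine forall₄_congr fun s1 s2 h1 h2 => ?_
  simp only [langOf_append_singleton_div (hsub.1 s1 h1).ne',
    langOf_append_singleton_div (hsub.1 s2 h2).ne', PDES.lang]

variable {Sc So : Finset E}

theorem w_mul_div_eq_w_mul_div_of_proj_eq (hsub : PSub L.toFun G.lang)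
    (hc : ProbControllable L.toFun G.lang Sc) (ho : ProbObservable L.toFun G.lang Sc So)
    {s1 s2 : List E} (h1 : 0 < L.toFun s1) (h2 : 0 < L.toFun s2)
    (hp : proj So s1 = proj So s2) (σ : E) :
    G.w s1 σ * (L.toFun (s2 ++ [σ]) / L.toFun s2) =
      G.w s2 σ * (L.toFun (s1 ++ [σ]) / L.toFun s1) := by
  by_cases hσ : σ ∈ Sc
  · exact (probObservable_lang_iff hsub Sc So).1 ho s1 s2 h1 h2 hp σ hσ
  · have hc := (probControllable_lang_iff hsub Sc).1 hc
    rw [hc s1 h1 σ hσ, hc s2 h2 σ hσ, mul_comm]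

open Classical in
/-- Which witness string is chosen does not matter, by `w_mul_div_eq_w_mul_div_of_proj_eq`. -/
noncomputable def observedScaling (G : PDES X E) (So : Finset E) (L : List E → ℝ) (t : List E)
    (σ : E) : ℝ :=
  if h : ∃ s, 0 < L s ∧ proj So s = t ∧ 0 < G.w s σ then
    L (h.choose ++ [σ]) / L h.choose / G.w h.choose σ
  else 1

theorem isScaling_observedScaling (hsub : PSub L.toFun G.lang)
    (hc : ProbControllable L.toFun G.lang Sc) :
    IsScaling G Sc So (observedScaling G So L.toFun) := by
  intro s _ σ
  unfold observedScaling
  split_ifs with h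
  · obtain ⟨hL, -, hw⟩ := h.choose_spec
    refine ⟨div_nonneg (div_nonneg (L.nonneg _) (L.nonneg _)) hw.le,
      div_le_one_of_le₀ (hsub.div_le_w hL σ) hw.le, fun hσ => ?_⟩
    rw [(probControllable_lang_iff hsub Sc).1 hc _ hL σ hσ, div_self hw.ne']
  · exact ⟨zero_le_one, le_rfl, fun _ => rfl⟩

theorem div_eq_w_mul_observedScaling (hsub : PSub L.toFun G.lang)
    (hc : ProbControllable L.toFun G.lang Sc) (ho : ProbObservable L.toFun G.lang Sc So)
    (s : List E) (hs : 0 < L.toFun s) (σ : E) :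
    L.toFun (s ++ [σ]) / L.toFun s = G.w s σ * observedScaling G So L.toFun (proj So s) σ := by
  rcases (G.w_nonneg s σ).eq_or_lt with hw | hw
  · rw [← hw, zero_mul]
    exact le_antisymm (hw ▸ hsub.div_le_w hs σ) (div_nonneg (L.nonneg _) (L.nonneg _))
  · have h : ∃ s', 0 < L.toFun s' ∧ proj So s' = proj So s ∧ 0 < G.w s' σ := ⟨s, hs, rfl, hw⟩
    obtain ⟨hL', hp', hw'⟩ := h.choose_spec
    have hcross := w_mul_div_eq_w_mul_div_of_proj_eq hsub hc ho hL' hs hp' σ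
    rw [observedScaling, dif_pos h, mul_div_assoc', eq_div_iff hw'.ne', mul_comm, hcross]

end Supervision

/-- a scaling-factor function achieving `L` exists iff `L` is
probabilistic controllable and observable. -/
theorem scaling_exists_iff_controllable_observable {X E : Type*} [Fintype E]
    [DecidableEq E] (G : PDES X E) (Sc So : Finset E) (L : PLang E)
    (hsub : PSub L.toFun G.lang) :
    (∃ K : List E → E → ℝ,
        IsScaling G Sc So K ∧ kLang G So K = L.toFun) ↔
    (ProbControllable L.toFun G.lang Sc ∧ ProbObservable L.toFun G.lang Sc So) := by
  constructor
  · rintro ⟨K, hK, hKL⟩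
    have hstep := (L.toFun_eq_langOf_iff _).1 hKL.symm
    rw [probControllable_lang_iff hsub, probObservable_lang_iff hsub]
    refine ⟨fun s hs σ hσ => ?_, fun s1 s2 h1 h2 hp σ _ => ?_⟩
    · rw [hstep s hs, (hK s (hsub.1 s hs) σ).2.2 hσ, mul_one]
    · rw [hstep s1 h1, hstep s2 h2, hp]
      ring
  · rintro ⟨hc, ho⟩
    exact ⟨observedScaling G So L.toFun, isScaling_observedScaling hsub hc,
      ((L.toFun_eq_langOf_iff _).2 (div_eq_w_mul_observedScaling hsub hc ho)).symm⟩
end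

section
/- Let G and H be PDESs over the same event set Σ with L_H ⊆ L_G, let Σc be the controllable events and Σo the observable events. Then H is probabilistic observable w.r.t. G, Σc and Σo (automata form) if and only if the probabilistic language L_H is probabilistic observable w.r.t. L_G, Σc and Σo (language form). -/
open scoped BigOperators

/-! Along a string, the step weight of a PDES is the transition probability of the state
reached, so a string in the support of its language reaches a state `x` and then
`L(sσ)/L(s) = ρ(x,σ)`. Since `supp L_H ⊆ supp L_G`, every ratio in the language form is thus
the corresponding transition probability in the automata form, and the two conditions are
the same equations. -/

lemma chainProd_append {E : Type*} (w : List E → E → ℝ) :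
    ∀ (rest pre : List E) (σ : E),
      chainProd w pre (rest ++ [σ]) = chainProd w pre rest * w (pre ++ rest) σ
  | [], pre, σ => by simp [chainProd]
  | τ :: rest, pre, σ => by
      simp [chainProd, chainProd_append w rest (pre ++ [τ]) σ, mul_assoc]

lemma langOf_append {E : Type*} (w : List E → E → ℝ) (s : List E) (σ : E) :
    langOf w (s ++ [σ]) = langOf w s * w s σ := by
  simpa [langOf] using chainProd_append w s [] σ

namespace PDES

variable {X E : Type*} [Fintype E] (G : PDES X E)

lemma transStar_append (s : List E) (σ : E) :
    G.transStar (s ++ [σ]) = (G.transStar s).bind fun x => G.trans x σ := by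
  simp [transStar, List.foldl_append]

lemma lang_append (s : List E) (σ : E) : G.lang (s ++ [σ]) = G.lang s * G.w s σ :=
  langOf_append G.w s σ

lemma prob_eq_zero_of_trans_eq_none {x : X} {σ : E} (h : G.trans x σ = none) :
    G.prob x σ = 0 :=
  le_antisymm (not_lt.mp fun hpos => by simpa [h] using (G.prob_pos_iff x σ).mp hpos)
    (G.prob_nonneg x σ)

lemma lang_eq_zero_of_transStar_eq_none {s : List E} (h : G.transStar s = none) :
    G.lang s = 0 := by
  induction s using List.reverseRecOn with
  | nil => simp [transStar] at h
  | append_singleton s σ ih =>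
    rw [lang_append]
    cases hs : G.transStar s with
    | none => rw [ih hs, zero_mul]
    | some x =>
      rw [transStar_append, hs] at h
      simp [w, hs, G.prob_eq_zero_of_trans_eq_none h]

lemma exists_transStar_eq_some_of_lang_pos {s : List E} (hs : 0 < G.lang s) :
    ∃ x, G.transStar s = some x :=
  Option.ne_none_iff_exists'.mp fun h => hs.ne' (G.lang_eq_zero_of_transStar_eq_none h)

lemma lang_append_div_lang {s : List E} {x : X} (hs : 0 < G.lang s)
    (hx : G.transStar s = some x) (σ : E) :
    G.lang (s ++ [σ]) / G.lang s = G.prob x σ := by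
  rw [lang_append, mul_div_cancel_left₀ _ hs.ne']
  simp [w, hx]

end PDES

/-- automata-form and language-form probabilistic observability agree. -/
theorem autObservable_iff_probObservable {X Q E : Type*} [Fintype E] [DecidableEq E]
    (G : PDES X E) (H : PDES Q E) (Sc So : Finset E)
    (hsub : PSub H.lang G.lang) :
    AutObservable G H Sc So ↔ ProbObservable H.lang G.lang Sc So := by
  refine forall₂_congr fun s1 s2 => forall₃_congr fun h1 h2 _ => ?_
  have hg1 : 0 < G.lang s1 := hsub.1 s1 h1
  have hg2 : 0 < G.lang s2 := hsub.1 s2 h2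
  obtain ⟨x1, hx1⟩ := G.exists_transStar_eq_some_of_lang_pos hg1
  obtain ⟨x2, hx2⟩ := G.exists_transStar_eq_some_of_lang_pos hg2
  obtain ⟨q1, hq1⟩ := H.exists_transStar_eq_some_of_lang_pos h1
  obtain ⟨q2, hq2⟩ := H.exists_transStar_eq_some_of_lang_pos h2
  simp only [hx1, hx2, hq1, hq2, Option.some_inj,
    G.lang_append_div_lang hg1 hx1, G.lang_append_div_lang hg2 hx2,
    H.lang_append_div_lang h1 hq1, H.lang_append_div_lang h2 hq2]
  exact ⟨fun hA => hA x1 q1 x2 q2 rfl rfl rfl rfl,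
    fun hL _ _ _ _ => by rintro rfl rfl rfl rfl; exact hL⟩
end
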